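/- arXiv:2301.04624 — 3 statements merged into one kernel-verified Lean document; each statement's English description precedes it below -/
import Mathlib

section
/- Let k ≥ 2 and let d, D be positive integers with k ≤ dD, and let C_k be the associated transfer matrix. Then every eigenvalue of C_k (as a matrix over ℂ) is a non-negative real number. -/
open Equiv Matrix

/-- Number of cycles of a permutation, counting fixed points as 1-cycles. -/
noncomputable def cyc {k : ℕ} (π : Equiv.Perm (Fin k)) : ℕ :=
  (k - π.cycleType.sum) + Multiset.card π.cycleType

/-- Gram matrix `G(q)_{στ} = q^{#(στ⁻¹)}`. -/
noncomputable def Gram (k q : ℕ) :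
    Matrix (Equiv.Perm (Fin k)) (Equiv.Perm (Fin k)) ℝ :=
  Matrix.of fun σ τ => (q : ℝ) ^ cyc (σ * τ⁻¹)

/-- Weingarten matrix `W = G(q)⁻¹`, so that `Wg(στ⁻¹, q) = W σ τ`. -/
noncomputable def WgM (k q : ℕ) :
    Matrix (Equiv.Perm (Fin k)) (Equiv.Perm (Fin k)) ℝ :=
  (Gram k q)⁻¹

/-- Transfer matrix `⟨τ|C_k|θ⟩ = Σ_σ Wg(στ⁻¹, dD) d^{#(σ)} D^{#(σθ⁻¹)}`. -/
noncomputable def Ck (k d D : ℕ) :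
    Matrix (Equiv.Perm (Fin k)) (Equiv.Perm (Fin k)) ℝ :=
  Matrix.of fun τ θ =>
    ∑ σ : Equiv.Perm (Fin k),
      WgM k (d * D) σ τ * (d : ℝ) ^ cyc σ * (D : ℝ) ^ cyc (σ * θ⁻¹)

/-!
Write `G_q` for the Gram matrix and `Δ = diag (d ^ #σ)`. Since the Weingarten matrix is symmetric,
`C_k = G_{dD}⁻¹ Δ G_D`. Each `G_q` is positive semidefinite, because `G_q(σ, τ)` counts the
colourings `f : [k] → [q]` with `f ∘ σ = f ∘ τ` and is therefore an honest Gram matrix of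
incidence vectors; and `G_D`, `G_{dD}` commute, being convolutions by class functions.
If `C_k v = λ v` then `Δ G_D v = λ G_{dD} v`; pairing with `w = G_D v` gives
`w* Δ w = λ · v* G_D G_{dD} v`, where both quadratic forms are nonnegative since a product of
commuting positive semidefinite matrices is positive semidefinite. So `λ ≥ 0`, the degenerate
case `v* G_D G_{dD} v = 0` forcing `Δ w = 0` and hence `λ = 0`.
-/

open Function
open scoped ComplexOrder MatrixOrder

namespace Equiv.Perm

variable {α β : Type*}

lemma comp_zpow_eq_self {π : Perm α} {f : α → β} (hf : f ∘ π = f) (i : ℤ) :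
    f ∘ ⇑(π ^ i) = f := by
  have hinv : f ∘ ⇑π⁻¹ = f := funext fun x => by simpa using (congrFun hf (π⁻¹ x)).symm
  induction i using Int.induction_on with
  | zero => rfl
  | succ n ih => rw [_root_.zpow_add_one, coe_mul, ← comp_assoc, ih, hf]
  | pred n ih => rw [_root_.zpow_sub_one, coe_mul, ← comp_assoc, ih, hinv]

def invariantFunEquiv (π : Perm α) (β : Type*) :
    {f : α → β // f ∘ π = f} ≃ (Quotient (SameCycle.setoid π) → β) where
  toFun f := Quotient.lift f.1 fun x _ ⟨i, hi⟩ =>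
    hi ▸ (congrFun (comp_zpow_eq_self f.2 i) x).symm
  invFun g := ⟨g ∘ Quotient.mk _, funext fun x =>
    congrArg g (Quotient.sound (sameCycle_apply_left.2 (SameCycle.refl π x)))⟩
  left_inv _ := rfl
  right_inv _ := funext (Quotient.ind fun _ => rfl)

variable [Fintype α] [DecidableEq α]

def orbitLabel (π : Perm α) (x : α) : fixedPoints π ⊕ π.cycleFactorsFinset :=
  if h : π x = x then .inl ⟨x, h⟩
  else .inr ⟨π.cycleOf x, cycleOf_mem_cycleFactorsFinset_iff.2 (mem_support.2 h)⟩

lemma orbitLabel_eq_iff (π : Perm α) (x y : α) :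
    orbitLabel π x = orbitLabel π y ↔ π.SameCycle x y := by
  by_cases hx : π x = x <;> by_cases hy : π y = y <;>
    simp only [orbitLabel, hx, hy, dif_pos, dif_neg, not_false_eq_true, reduceCtorEq, false_iff,
      Sum.inl.injEq, Sum.inr.injEq, Subtype.ext_iff]
  · exact ⟨fun h => h ▸ SameCycle.refl π x, fun h => h.eq_of_left hx⟩
  · exact fun h => hy (h.eq_of_left hx ▸ hx)
  · exact fun h => hx (h.symm.eq_of_left hy ▸ hy)
  · refine ⟨fun h => ?_, SameCycle.cycleOf_eq⟩
    rw [← mem_support_cycleOf_iff' hx, h, mem_support_cycleOf_iff' hy]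

lemma orbitLabel_surjective (π : Perm α) : Surjective (orbitLabel π) := by
  rintro (⟨x, hx⟩ | ⟨c, hc⟩)
  · exact ⟨x, dif_pos hx⟩
  · obtain ⟨a, ha⟩ := (mem_cycleFactorsFinset_iff.1 hc).1.nonempty_support
    have hmoved : π a ≠ a := by
      rw [← (mem_cycleFactorsFinset_iff.1 hc).2 a ha]; exact mem_support.1 ha
    refine ⟨a, ?_⟩
    simp only [orbitLabel, dif_neg hmoved, (cycle_is_cycleOf ha hc).symm]

lemma card_quotient_sameCycle (π : Perm α) :
    Nat.card (Quotient (SameCycle.setoid π)) =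
      Fintype.card α - π.cycleType.sum + Multiset.card π.cycleType := by
  have hker : SameCycle.setoid π = Setoid.ker (orbitLabel π) :=
    Setoid.ext fun x y => (orbitLabel_eq_iff π x y).symm
  rw [hker, Nat.card_congr (Setoid.quotientKerEquivOfSurjective _ (orbitLabel_surjective π)),
    Nat.card_sum, Nat.card_eq_fintype_card, card_fixedPoints, Nat.card_eq_fintype_card,
    Fintype.card_coe, cycleType_def, Multiset.card_map]
  rfl

end Equiv.Perm

lemma Matrix.commute_of_apply_mul_comm {G R : Type*} [Group G] [Fintype G] [CommSemiring R]
    (f g : G → R) (hg : ∀ x y, g (x * y) = g (y * x)) :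
    Commute (of fun σ τ => f (σ * τ⁻¹)) (of fun σ τ => g (σ * τ⁻¹)) := by
  ext σ τ
  simp only [mul_apply, of_apply]
  let e : G ≃ G :=
    ⟨fun ρ => σ * ρ⁻¹ * τ, fun μ => τ * μ⁻¹ * σ, fun _ => by group, fun _ => by group⟩
  refine Fintype.sum_equiv e _ _ fun ρ => ?_
  have hρ : g (ρ * τ⁻¹) = g (σ * (σ * ρ⁻¹ * τ)⁻¹) := by
    rw [hg, hg σ]; group
  simp only [e, Equiv.coe_fn_mk, hρ, mul_comm (f _)]
  congr 2; group

lemma Matrix.map_nonsing_inv {n K L : Type*} [Fintype n] [DecidableEq n] [Field K] [Field L]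
    (f : K →+* L) (A : Matrix n n K) : A⁻¹.map f = (A.map f)⁻¹ := by
  have hadj : (A.map f).adjugate = A.adjugate.map f := (f.map_adjugate A).symm
  have hdet : (A.map f).det = f A.det := (f.map_det A).symm
  rw [inv_def, inv_def, hadj, hdet, map_smul' _ _ _ (map_mul f), Ring.inverse_eq_inv',
    Ring.inverse_eq_inv', map_inv₀]

lemma nonneg_of_mulVec_eq_smul_mulVec {n : Type*} [Fintype n] [DecidableEq n]
    {G P B : Matrix n n ℂ} (hG : G.PosSemidef) (hP : P.PosSemidef) (hB : B.PosSemidef)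
    (hGB : Commute G B) {v : n → ℂ} {μ : ℂ} (hGv : G *ᵥ v ≠ 0)
    (h : (P * B) *ᵥ v = μ • G *ᵥ v) : 0 ≤ μ := by
  set w := B *ᵥ v
  set t := star v ⬝ᵥ (B * G) *ᵥ v
  have ht : 0 ≤ t := by
    rw [← nonneg_iff_posSemidef] at hG hB
    exact (nonneg_iff_posSemidef.1 (hGB.symm.mul_nonneg hB hG)).dotProduct_mulVec_nonneg v
  have hPw : P *ᵥ w = μ • G *ᵥ v := by rw [mulVec_mulVec, h]
  have hwPw : star w ⬝ᵥ P *ᵥ w = μ * t := by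
    rw [hPw, dotProduct_smul, smul_eq_mul, star_mulVec, ← dotProduct_mulVec, hB.1.eq, mulVec_mulVec]
  rcases ht.eq_or_lt with ht0 | htpos
  · have : μ • G *ᵥ v = 0 := by
      rw [← hPw, ← hP.dotProduct_mulVec_zero_iff, hwPw, ← ht0, mul_zero]
    exact ((smul_eq_zero.1 this).resolve_right hGv).ge
  · have := div_nonneg (hwPw ▸ hP.dotProduct_mulVec_nonneg w) htpos.le
    rwa [mul_div_cancel_right₀ _ htpos.ne'] at this

lemma nonneg_of_inv_mul_mul_mulVec_eq_smul {n : Type*} [Fintype n] [DecidableEq n]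
    {G P B : Matrix n n ℂ} (hG : G.PosSemidef) (hP : P.PosSemidef) (hB : B.PosSemidef)
    (hGB : Commute G B) {v : n → ℂ} {μ : ℂ} (hv : v ≠ 0)
    (h : (G⁻¹ * P * B) *ᵥ v = μ • v) : 0 ≤ μ := by
  by_cases hdet : IsUnit G.det
  · have hGv : G *ᵥ v ≠ 0 := fun h0 => hv <| by
      rw [← one_mulVec v, ← nonsing_inv_mul G hdet, ← mulVec_mulVec, h0, mulVec_zero]
    refine nonneg_of_mulVec_eq_smul_mulVec hG hP hB hGB hGv ?_
    rw [← mul_nonsing_inv_cancel_left _ (P * B) hdet, ← mulVec_mulVec, ← Matrix.mul_assoc, h,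
      mulVec_smul]
  · -- `G⁻¹ = 0` when `G` is singular
    rw [nonsing_inv_apply_not_isUnit G hdet, Matrix.zero_mul, Matrix.zero_mul, zero_mulVec] at h
    exact ((smul_eq_zero.1 h.symm).resolve_right hv).ge

lemma cyc_inv {k : ℕ} (π : Perm (Fin k)) : cyc π⁻¹ = cyc π := by
  simp [cyc, Perm.cycleType_inv]

lemma cyc_mul_comm {k : ℕ} (σ τ : Perm (Fin k)) : cyc (σ * τ) = cyc (τ * σ) := by
  have hconj : τ * (σ * τ) * τ⁻¹ = τ * σ := by group
  simp only [cyc, ← hconj, Perm.cycleType_conj]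

lemma cyc_eq_card_quotient {k : ℕ} (π : Perm (Fin k)) :
    cyc π = Nat.card (Quotient (Perm.SameCycle.setoid π)) := by
  rw [Perm.card_quotient_sameCycle, Fintype.card_fin, cyc]

lemma card_comp_eq_comp {k : ℕ} (σ τ : Perm (Fin k)) (β : Type*) :
    Nat.card {f : Fin k → β // f ∘ σ = f ∘ τ} = Nat.card β ^ cyc (σ * τ⁻¹) := by
  have hiff : ∀ f : Fin k → β, f ∘ σ = f ∘ τ ↔ f ∘ ⇑(σ * τ⁻¹) = f := fun f => by
    rw [Perm.coe_mul, ← comp_assoc, Perm.inv_def, Equiv.comp_symm_eq]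
  rw [Nat.card_congr ((Equiv.subtypeEquivRight hiff).trans (Perm.invariantFunEquiv _ β)),
    Nat.card_fun, cyc_eq_card_quotient]

lemma gram_apply (k q : ℕ) (σ τ : Perm (Fin k)) : Gram k q σ τ = (q : ℝ) ^ cyc (σ * τ⁻¹) := rfl

lemma gram_isSymm (k q : ℕ) : (Gram k q).IsSymm := by
  ext σ τ
  rw [transpose_apply, gram_apply, gram_apply, ← cyc_inv, _root_.mul_inv_rev, inv_inv]

lemma gram_commute (k a b : ℕ) : Commute (Gram k a) (Gram k b) :=
  commute_of_apply_mul_comm (fun π => (a : ℝ) ^ cyc π) (fun π => (b : ℝ) ^ cyc π)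
    fun _ _ => by rw [cyc_mul_comm]

lemma ck_eq (k d D : ℕ) :
    Ck k d D = (Gram k (d * D))⁻¹ * diagonal (fun σ => (d : ℝ) ^ cyc σ) * Gram k D := by
  ext τ θ
  rw [mul_apply]
  simp only [Ck, WgM, of_apply, mul_diagonal, (gram_isSymm k (d * D)).inv.apply, gram_apply]

lemma posSemidef_gram_map (k q : ℕ) : ((Gram k q).map ((↑) : ℝ → ℂ)).PosSemidef := by
  let N : Matrix (Perm (Fin k)) ((Fin k → Fin q) × (Fin k → Fin q)) ℂ :=
    of fun σ p => if p.2 = p.1 ∘ σ then 1 else 0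
  suffices (Gram k q).map ((↑) : ℝ → ℂ) = N * Nᴴ from this ▸ posSemidef_self_mul_conjTranspose N
  ext σ τ
  have hcount : (Finset.univ.filter fun f : Fin k → Fin q => f ∘ σ = f ∘ τ).card =
      q ^ cyc (σ * τ⁻¹) := by
    simpa [Nat.card_eq_fintype_card, Fintype.card_subtype] using card_comp_eq_comp σ τ (Fin q)
  simp only [N, gram_apply, map_apply, Complex.ofReal_pow, Complex.ofReal_natCast, mul_apply,
    of_apply, conjTranspose_apply, RCLike.star_def, MonoidWithZeroHom.map_ite_one_zero, mul_ite,
    mul_one, mul_zero, Fintype.sum_prod_type, Finset.sum_ite_eq', Finset.mem_univ, ↓reduceIte,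
    eq_comm, Finset.sum_boole]
  exact_mod_cast hcount.symm

lemma ck_map_ofReal (k d D : ℕ) :
    (Ck k d D).map ((↑) : ℝ → ℂ) = ((Gram k (d * D)).map (↑))⁻¹ *
      diagonal (fun σ => ((d : ℂ) ^ cyc σ)) * (Gram k D).map (↑) := by
  have hcoe : ((↑) : ℝ → ℂ) = Complex.ofRealHom := rfl
  rw [ck_eq, hcoe, Matrix.map_mul, Matrix.map_mul, Matrix.map_nonsing_inv,
    diagonal_map (map_zero _)]
  simp

theorem eigenvalues_Ck_nonneg_real_general (k d D : ℕ) (lam : ℂ)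
    (hlam : ∃ v : Equiv.Perm (Fin k) → ℂ, v ≠ 0 ∧
      ((Ck k d D).map ((↑) : ℝ → ℂ)).mulVec v = lam • v) :
    ∃ x : ℝ, 0 ≤ x ∧ lam = (x : ℂ) := by
  obtain ⟨v, hv, hCv⟩ := hlam
  rw [ck_map_ofReal] at hCv
  have hΔ : (diagonal fun σ : Perm (Fin k) => (d : ℂ) ^ cyc σ).PosSemidef :=
    posSemidef_diagonal_iff.2 fun _ => pow_nonneg (Nat.cast_nonneg _) _
  have hcomm := (gram_commute k (d * D) D).map Complex.ofRealHom.mapMatrix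
  obtain ⟨x, hx, rfl⟩ := RCLike.nonneg_iff_exists_ofReal.1 <|
    nonneg_of_inv_mul_mul_mulVec_eq_smul (posSemidef_gram_map k (d * D)) hΔ
      (posSemidef_gram_map k D) hcomm hv hCv
  exact ⟨x, hx, rfl⟩

/-- Every eigenvalue of `C_k`, viewed as a matrix over `ℂ`, is a non-negative real number. -/
theorem eigenvalues_Ck_nonneg_real (k d D : ℕ) (hk : 2 ≤ k) (hd : 0 < d) (hD : 0 < D)
    (hkdD : k ≤ d * D) (lam : ℂ)
    (hlam : ∃ v : Equiv.Perm (Fin k) → ℂ, v ≠ 0 ∧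
      ((Ck k d D).map ((↑) : ℝ → ℂ)).mulVec v = lam • v) :
    ∃ x : ℝ, 0 ≤ x ∧ lam = (x : ℂ) :=
  eigenvalues_Ck_nonneg_real_general k d D lam hlam
end

section
/- Let k ≥ 2 and let d, D be positive integers with k ≤ dD, and let C_k be the associated transfer matrix. Then C_k is diagonalizable over ℝ, i.e., there exist an invertible matrix P ∈ ℝ^{k!×k!} and a diagonal matrix Δ ∈ ℝ^{k!×k!} such that C_k = P Δ P⁻¹. -/
open Equiv Matrix

/- ### Auxiliary lemmas -/

lemma cyc_conj {k : ℕ} (σ π : Equiv.Perm (Fin k)) : cyc (σ * π * σ⁻¹) = cyc π := by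
  unfold cyc
  rw [Equiv.Perm.cycleType_conj]

lemma cyc_mul_comm_s1 {k : ℕ} (a b : Equiv.Perm (Fin k)) : cyc (a * b) = cyc (b * a) := by
  have := cyc_conj a (b * a)
  simpa [mul_assoc] using this

/-- Gram matrices are symmetric. -/
lemma gram_symm (k q : ℕ) : (Gram k q)ᵀ = Gram k q := by
  ext σ τ
  simp only [Matrix.transpose_apply, Gram, Matrix.of_apply]
  have : cyc (τ * σ⁻¹) = cyc (σ * τ⁻¹) := by
    have h1 : (σ * τ⁻¹)⁻¹ = τ * σ⁻¹ := by group
    unfold cyc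
    rw [← h1, Equiv.Perm.cycleType_inv]
  rw [this]

/-- Gram matrices commute with each other. -/
lemma gram_comm (k p q : ℕ) : Gram k p * Gram k q = Gram k q * Gram k p := by
  ext σ θ
  simp only [Matrix.mul_apply, Gram, Matrix.of_apply]
  refine Fintype.sum_equiv
    ⟨fun π => σ * π⁻¹ * θ, fun ρ => θ * ρ⁻¹ * σ⁻¹⁻¹,
      fun π => by simp [_root_.mul_inv_rev, mul_assoc],
      fun ρ => by simp [_root_.mul_inv_rev, mul_assoc]⟩ _ _ ?_
  intro π
  simp only [Equiv.coe_fn_mk]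
  have h1 : σ * (σ * π⁻¹ * θ)⁻¹ = σ * (θ⁻¹ * π) * σ⁻¹ := by group
  have h2 : (σ * π⁻¹ * θ) * θ⁻¹ = σ * π⁻¹ := by group
  rw [h1, h2, cyc_conj, mul_comm ((p:ℝ) ^ _)]
  congr 2
  rw [cyc_mul_comm_s1]

/-- Diagonal square-root matrix with entries `(√d)^{cyc σ}`. -/
noncomputable def Nd (k d : ℕ) : Matrix (Equiv.Perm (Fin k)) (Equiv.Perm (Fin k)) ℝ :=
  Matrix.diagonal fun σ => (Real.sqrt d) ^ cyc σ

lemma Nd_mul_Nd (k d : ℕ) :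
    Nd k d * Nd k d = Matrix.diagonal fun σ => (d : ℝ) ^ cyc σ := by
  have h : (fun σ : Equiv.Perm (Fin k) => (Real.sqrt d) ^ cyc σ * (Real.sqrt d) ^ cyc σ)
      = fun σ => (d : ℝ) ^ cyc σ := by
    funext σ
    rw [← pow_add, ← two_mul, pow_mul, Real.sq_sqrt (by positivity)]
  rw [Nd, Matrix.diagonal_mul_diagonal, h]

lemma Nd_isUnit (k d : ℕ) (hd : 0 < d) : IsUnit (Nd k d).det := by
  rw [Nd, Matrix.det_diagonal]
  refine (Finset.prod_ne_zero_iff.2 fun σ _ => ?_).isUnit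
  have : (0:ℝ) < Real.sqrt d := Real.sqrt_pos.2 (by exact_mod_cast hd)
  positivity

/-- Key factorization `Ck = G(dD)⁻¹ * Λ_d * G(D)` (using symmetry of `G(dD)⁻¹`). -/
lemma Ck_eq (k d D : ℕ) :
    Ck k d D = (Gram k (d * D))⁻¹ * (Matrix.diagonal fun σ => (d : ℝ) ^ cyc σ) * Gram k D := by
  have hsymm : ((Gram k (d * D))⁻¹)ᵀ = (Gram k (d * D))⁻¹ := by
    rw [Matrix.transpose_nonsing_inv, gram_symm]
  ext τ θ
  simp only [Ck, WgM, Matrix.of_apply, Matrix.mul_apply, Matrix.diagonal_apply,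
    Finset.sum_ite_eq, Finset.mem_univ, if_true]
  refine Finset.sum_congr rfl fun σ _ => ?_
  have h : (Gram k (d * D))⁻¹ σ τ = (Gram k (d * D))⁻¹ τ σ := by
    conv_lhs => rw [← hsymm]
    rw [Matrix.transpose_apply]
  rw [h]
  simp [Gram, mul_comm, mul_assoc]

/-- If `A = M * S * M⁻¹` with `M` invertible and `S` symmetric, then `A` is diagonalizable. -/
lemma diag_of_conj_symm {n : Type*} [Fintype n] [DecidableEq n]
    (A M S : Matrix n n ℝ) (hM : IsUnit M.det) (hS : S.IsHermitian)
    (hA : A = M * S * M⁻¹) :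
    ∃ P Δ : Matrix n n ℝ, IsUnit P.det ∧ Δ.IsDiag ∧ A = P * Δ * P⁻¹ := by
  set U : Matrix n n ℝ := (hS.eigenvectorUnitary : Matrix n n ℝ) with hU
  have hUU : U * star U = 1 := (Matrix.mem_unitaryGroup_iff).mp hS.eigenvectorUnitary.2
  have hUdet : IsUnit U.det := Matrix.isUnit_det_of_right_inverse hUU
  have hUinv : U⁻¹ = star U := Matrix.inv_eq_right_inv hUU
  refine ⟨M * U, Matrix.diagonal (RCLike.ofReal ∘ hS.eigenvalues), ?_, Matrix.isDiag_diagonal _, ?_⟩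
  · rw [Matrix.det_mul]; exact hM.mul hUdet
  · rw [Matrix.mul_inv_rev, hUinv, hA]
    have hspec : S = U * Matrix.diagonal (RCLike.ofReal ∘ hS.eigenvalues) * star U :=
      hS.spectral_theorem
    conv_lhs => rw [hspec]
    noncomm_ring

/-- Algebraic conjugation identity. -/
lemma conj_factor {n : Type*} [Fintype n] [DecidableEq n]
    (G N GD : Matrix n n ℝ) (hG : IsUnit G.det) (hN : IsUnit N.det)
    (hcomm : G⁻¹ * GD = GD * G⁻¹) :
    G⁻¹ * (N * N) * GD = (G⁻¹ * N) * (N * GD * G⁻¹ * N) * (G⁻¹ * N)⁻¹ := by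
  have hNN : N * N⁻¹ = 1 := Matrix.mul_nonsing_inv _ hN
  have hGG : G⁻¹ * G = 1 := Matrix.nonsing_inv_mul _ hG
  have hMinv : (G⁻¹ * N)⁻¹ = N⁻¹ * G := by
    apply Matrix.inv_eq_right_inv
    calc G⁻¹ * N * (N⁻¹ * G) = G⁻¹ * ((N * N⁻¹) * G) := by simp only [mul_assoc]
      _ = 1 := by rw [hNN, one_mul, hGG]
  rw [hMinv]
  symm
  calc (G⁻¹ * N) * (N * GD * G⁻¹ * N) * (N⁻¹ * G)
      = G⁻¹ * (N * (N * (GD * (G⁻¹ * (N * (N⁻¹ * G)))))) := by simp only [mul_assoc]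
    _ = G⁻¹ * (N * (N * (GD * (G⁻¹ * ((N * N⁻¹) * G))))) := by simp only [mul_assoc]
    _ = G⁻¹ * (N * (N * (GD * (G⁻¹ * G)))) := by rw [hNN, one_mul]
    _ = G⁻¹ * (N * (N * GD)) := by rw [hGG, mul_one]
    _ = G⁻¹ * (N * N) * GD := by simp only [mul_assoc]

/-- `C_k` is diagonalizable over `ℝ`: `C_k = P Δ P⁻¹` with `P` invertible and `Δ` diagonal. -/
theorem Ck_diagonalizable (k d D : ℕ) (hk : 2 ≤ k) (hd : 0 < d) (hD : 0 < D)
    (hkdD : k ≤ d * D) :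
    ∃ P Δ : Matrix (Equiv.Perm (Fin k)) (Equiv.Perm (Fin k)) ℝ,
      IsUnit P.det ∧ Δ.IsDiag ∧ Ck k d D = P * Δ * P⁻¹ := by
  by_cases hG : IsUnit (Gram k (d * D)).det
  · -- main case
    set G := Gram k (d * D) with hGdef
    set N := Nd k d with hNdef
    set GD := Gram k D with hGDdef
    have hN : IsUnit N.det := Nd_isUnit k d hd
    have hcomm : G⁻¹ * GD = GD * G⁻¹ := by
      have h := gram_comm k (d * D) D
      calc G⁻¹ * GD = G⁻¹ * GD * (G * G⁻¹) := by
            rw [Matrix.mul_nonsing_inv _ hG, mul_one]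
        _ = G⁻¹ * (GD * G) * G⁻¹ := by simp only [mul_assoc]
        _ = G⁻¹ * (G * GD) * G⁻¹ := by rw [← h]
        _ = (G⁻¹ * G) * (GD * G⁻¹) := by simp only [mul_assoc]
        _ = GD * G⁻¹ := by rw [Matrix.nonsing_inv_mul _ hG, one_mul]
    have hS : (N * GD * G⁻¹ * N).IsHermitian := by
      have hNt : Nᵀ = N := Matrix.diagonal_transpose _
      have hGDt : GDᵀ = GD := gram_symm k D
      have hGit : (G⁻¹)ᵀ = G⁻¹ := by rw [Matrix.transpose_nonsing_inv, gram_symm]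
      rw [Matrix.IsHermitian, Matrix.conjTranspose_eq_transpose_of_trivial]
      simp only [Matrix.transpose_mul, hNt, hGDt, hGit]
      rw [← mul_assoc G⁻¹ GD N, hcomm]
      simp only [mul_assoc]
    refine diag_of_conj_symm _ (G⁻¹ * N) _ ?_ hS ?_
    · rw [Matrix.det_mul]
      exact (Matrix.isUnit_nonsing_inv_det _ hG).mul hN
    · rw [Ck_eq, ← Nd_mul_Nd k d]
      exact conj_factor G N GD hG hN hcomm
  · -- degenerate case: G⁻¹ = 0 so Ck = 0
    have h0 : Ck k d D = 0 := by
      ext τ θ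
      simp [Ck, WgM, Matrix.nonsing_inv_apply_not_isUnit _ hG]
    exact ⟨1, 0, by simp, Matrix.isDiag_zero, by simp [h0]⟩
end

section
/- Let d, D ≥ 2 be integers, set α = (d²D − D)/(d²D² − 1) and β = (dD² − d)/(d²D² − 1), and let C_2 = [[1, α],[0, β]] and T_x = [[β, 0],[α, 1]] (the transfer matrices for k = 2 at the identity and at the transposition x = (1 2), in the basis (e, x)). Let δ_e = (1, 0)ᵀ, let a, b ≥ 1 be integers, and let v ∈ ℝ² be a row vector with v C_2 = v and v·δ_e = 1. Then v T_x^a δ_e > 0, v T_x^b δ_e > 0, and there exists a constant K ∈ ℝ such that for every integer r ≥ 0, v T_x^a C_2^r T_x^b δ_e = (v T_x^a δ_e)(v T_x^b δ_e)(1 + K β^r). (This is the exact transfer-matrix identity underlying the result that the average Rényi-2 mutual information of the random MPS ensemble satisfies E I_2(A:B) = log(1 + K β^r), hence decays exponentially with correlation length ξ_1D = −1/log β.) -/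
open Matrix

/-- `α = (d²D − D)/(d²D² − 1)`. -/
noncomputable def alph (d D : ℕ) : ℝ :=
  ((d : ℝ) ^ 2 * D - D) / ((d : ℝ) ^ 2 * D ^ 2 - 1)

/-- `β = (dD² − d)/(d²D² − 1)`. -/
noncomputable def bet (d D : ℕ) : ℝ :=
  ((d : ℝ) * D ^ 2 - d) / ((d : ℝ) ^ 2 * D ^ 2 - 1)

/-- The `k = 2` transfer matrix at the identity, `C₂ = [[1, α], [0, β]]`. -/
noncomputable def C2 (d D : ℕ) : Matrix (Fin 2) (Fin 2) ℝ :=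
  !![1, alph d D; 0, bet d D]

/-- The `k = 2` transfer matrix at the transposition `x = (1 2)`, `T_x = [[β, 0], [α, 1]]`. -/
noncomputable def Tx (d D : ℕ) : Matrix (Fin 2) (Fin 2) ℝ :=
  !![bet d D, 0; alph d D, 1]

/-!
Write `α = c (1 - β)` with `c = α / (1 - β)`. Then `T_xⁿ = [[βⁿ, 0], [c (1 - βⁿ), 1]]`,
`C₂ʳ = [[1, c (1 - βʳ)], [0, βʳ]]`, and the normalized left fixed vector of `C₂` is `v = (1, c)`.
Hence `v T_xⁿ δ_e = c² + (1 - c²) βⁿ ≥ βⁿ > 0`, and multiplying out,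
`v T_x^a C₂ʳ T_x^b δ_e = (v T_x^a δ_e) (v T_x^b δ_e) + c² (1 - c²) (1 - β^a) (1 - β^b) βʳ`,
which gives `K = c² (1 - c²) (1 - β^a) (1 - β^b) / ((v T_x^a δ_e) (v T_x^b δ_e))`.
-/

section TransferMatrix

variable {R : Type*} [CommRing R] (c β : R)

theorem pow_lowerTriangular (n : ℕ) :
    !![β, 0; c * (1 - β), 1] ^ n = !![β ^ n, 0; c * (1 - β ^ n), 1] := by
  induction n with
  | zero => simp [one_fin_two]
  | succ n ih =>
    rw [pow_succ, ih, mul_fin_two]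
    ext i j
    fin_cases i <;> fin_cases j <;>
      simp only [of_apply, cons_val', cons_val_zero, cons_val_one, cons_val_fin_one,
        Fin.zero_eta, Fin.mk_one] <;> ring

theorem pow_upperTriangular (n : ℕ) :
    !![1, c * (1 - β); 0, β] ^ n = !![1, c * (1 - β ^ n); 0, β ^ n] := by
  induction n with
  | zero => simp [one_fin_two]
  | succ n ih =>
    rw [pow_succ, ih, mul_fin_two]
    ext i j
    fin_cases i <;> fin_cases j <;>
      simp only [of_apply, cons_val', cons_val_zero, cons_val_one, cons_val_fin_one,
        Fin.zero_eta, Fin.mk_one] <;> ring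

theorem dotProduct_pow_lowerTriangular_mulVec (n : ℕ) :
    ![1, c] ⬝ᵥ (!![β, 0; c * (1 - β), 1] ^ n) *ᵥ ![1, 0] = c ^ 2 + (1 - c ^ 2) * β ^ n := by
  rw [pow_lowerTriangular]
  simp only [dotProduct, Fin.sum_univ_two, mulVec, of_apply, cons_val_zero, cons_val_one]
  ring

theorem dotProduct_pow_mul_pow_mul_pow_mulVec (a r b : ℕ) :
    ![1, c] ⬝ᵥ (!![β, 0; c * (1 - β), 1] ^ a * !![1, c * (1 - β); 0, β] ^ r *
        !![β, 0; c * (1 - β), 1] ^ b) *ᵥ ![1, 0] =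
      (c ^ 2 + (1 - c ^ 2) * β ^ a) * (c ^ 2 + (1 - c ^ 2) * β ^ b) +
        c ^ 2 * (1 - c ^ 2) * (1 - β ^ a) * (1 - β ^ b) * β ^ r := by
  rw [pow_lowerTriangular, pow_lowerTriangular, pow_upperTriangular, mul_fin_two, mul_fin_two]
  simp only [dotProduct, Fin.sum_univ_two, mulVec, of_apply, cons_val_zero, cons_val_one]
  ring

end TransferMatrix

theorem eq_of_vecMul_upperTriangular_eq {K : Type*} [Field K] {c β : K} (hβ : β ≠ 1)
    {v : Fin 2 → K} (hv : v ᵥ* !![1, c * (1 - β); 0, β] = v) (hv1 : v ⬝ᵥ ![1, 0] = 1) :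
    v = ![1, c] := by
  have hv0 : v 0 = 1 := by simpa [dotProduct, Fin.sum_univ_two] using hv1
  have hfix : v 0 * (c * (1 - β)) + v 1 * β = v 1 := by
    simpa [vecMul, dotProduct, Fin.sum_univ_two] using congrFun hv 1
  have hvc : v 1 = c :=
    mul_right_cancel₀ (sub_ne_zero.mpr hβ.symm) (by rw [hv0] at hfix; linear_combination -hfix)
  ext i
  fin_cases i <;> simp [hv0, hvc]

theorem sq_add_one_sub_sq_mul_pow_pos {c β : ℝ} (hβ0 : 0 < β) (hβ1 : β ≤ 1) (n : ℕ) :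
    0 < c ^ 2 + (1 - c ^ 2) * β ^ n := by
  have h1 : β ^ n ≤ 1 := pow_le_one₀ hβ0.le hβ1
  have h2 : 0 < β ^ n := pow_pos hβ0 n
  nlinarith [sq_nonneg c]

theorem bet_pos {d D : ℕ} (hd : 1 ≤ d) (hD : 2 ≤ D) : 0 < bet d D := by
  have hd' : (1 : ℝ) ≤ d := by exact_mod_cast hd
  have hD' : (2 : ℝ) ≤ D := by exact_mod_cast hD
  have hdD : 2 ≤ (d : ℝ) * D := by nlinarith
  have hD2 : 0 < (D : ℝ) ^ 2 - 1 := by nlinarith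
  refine div_pos ?_ (by nlinarith)
  nlinarith [mul_pos (by linarith : (0 : ℝ) < d) hD2]

theorem bet_lt_one {d D : ℕ} (hd : 2 ≤ d) (hD : 1 ≤ D) : bet d D < 1 := by
  have hd' : (2 : ℝ) ≤ d := by exact_mod_cast hd
  have hD' : (1 : ℝ) ≤ D := by exact_mod_cast hD
  have hdD : 2 ≤ (d : ℝ) * D := by nlinarith
  rw [bet, div_lt_one (by nlinarith)]
  nlinarith [mul_pos (by linarith : (0 : ℝ) < d - 1) (by positivity : (0 : ℝ) < d * D ^ 2 + 1)]

theorem mps_renyi2_transfer_identity_general (d D : ℕ) (hd : 2 ≤ d) (hD : 2 ≤ D)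
    (a b : ℕ) (v : Fin 2 → ℝ)
    (hv : v ᵥ* C2 d D = v) (hv1 : v ⬝ᵥ ![1, 0] = 1) :
    0 < v ⬝ᵥ ((Tx d D) ^ a).mulVec ![1, 0] ∧
    0 < v ⬝ᵥ ((Tx d D) ^ b).mulVec ![1, 0] ∧
    ∃ K : ℝ, ∀ r : ℕ,
      v ⬝ᵥ ((Tx d D) ^ a * (C2 d D) ^ r * (Tx d D) ^ b).mulVec ![1, 0] =
        (v ⬝ᵥ ((Tx d D) ^ a).mulVec ![1, 0]) * (v ⬝ᵥ ((Tx d D) ^ b).mulVec ![1, 0]) *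
          (1 + K * (bet d D) ^ r) := by
  have hβ0 : 0 < bet d D := bet_pos (by omega) hD
  have hβ1 : bet d D < 1 := bet_lt_one hd (by omega)
  set β := bet d D
  set c := alph d D / (1 - β)
  have hα : alph d D = c * (1 - β) := (div_mul_cancel₀ _ (by linarith)).symm
  have hC : C2 d D = !![1, c * (1 - β); 0, β] := by rw [C2, hα]
  have hT : Tx d D = !![β, 0; c * (1 - β), 1] := by rw [Tx, hα]
  rw [hC] at hv
  rw [hC, hT]
  obtain rfl := eq_of_vecMul_upperTriangular_eq hβ1.ne hv hv1
  simp only [dotProduct_pow_lowerTriangular_mulVec]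
  have hpa := sq_add_one_sub_sq_mul_pow_pos (c := c) hβ0 hβ1.le a
  have hpb := sq_add_one_sub_sq_mul_pow_pos (c := c) hβ0 hβ1.le b
  refine ⟨hpa, hpb, c ^ 2 * (1 - c ^ 2) * (1 - β ^ a) * (1 - β ^ b) /
    ((c ^ 2 + (1 - c ^ 2) * β ^ a) * (c ^ 2 + (1 - c ^ 2) * β ^ b)), fun r => ?_⟩
  rw [dotProduct_pow_mul_pow_mul_pow_mulVec]
  field_simp

/-- Exact transfer-matrix identity underlying the exponential decay of the average Rényi-2
mutual information of the random MPS ensemble: for a normalized left fixed vector `v` of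
`C₂`, one has `v T_x^a C₂^r T_x^b δ_e = (v T_x^a δ_e)(v T_x^b δ_e)(1 + K β^r)` for a
constant `K`, with `v T_x^a δ_e, v T_x^b δ_e > 0`. -/
theorem mps_renyi2_transfer_identity (d D : ℕ) (hd : 2 ≤ d) (hD : 2 ≤ D)
    (a b : ℕ) (ha : 1 ≤ a) (hb : 1 ≤ b) (v : Fin 2 → ℝ)
    (hv : v ᵥ* C2 d D = v) (hv1 : v ⬝ᵥ ![1, 0] = 1) :
    0 < v ⬝ᵥ ((Tx d D) ^ a).mulVec ![1, 0] ∧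
    0 < v ⬝ᵥ ((Tx d D) ^ b).mulVec ![1, 0] ∧
    ∃ K : ℝ, ∀ r : ℕ,
      v ⬝ᵥ ((Tx d D) ^ a * (C2 d D) ^ r * (Tx d D) ^ b).mulVec ![1, 0] =
        (v ⬝ᵥ ((Tx d D) ^ a).mulVec ![1, 0]) * (v ⬝ᵥ ((Tx d D) ^ b).mulVec ![1, 0]) *
          (1 + K * (bet d D) ^ r) :=
  mps_renyi2_transfer_identity_general d D hd hD a b v hv hv1
end
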